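/- Let (A,·) be a group. There is a bijective correspondence between group operations ∘ making (A,·,∘) a skew brace and regular subgroups G of the holomorph Hol(A,·) = A ⋊ Aut(A,·): to ∘ one associates G = {(a, λ_a) | a ∈ A}, and conversely a regular subgroup G gives a∘b := a·μ_a(b) where (a, μ_a) is the unique element of G projecting to a. -/

import Mathlib

/-- A skew brace structure on a group `(A,·)`: a second group operation `∘`
(with identity `e` and inverse `cinv`) satisfying
`a ∘ (b · c) = (a ∘ b) · a⁻¹ · (a ∘ c)`. -/
structure SkewBrace (A : Type*) [Group A] where
  circ : A → A → A
  e : A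
  cinv : A → A
  circ_assoc : ∀ a b c, circ (circ a b) c = circ a (circ b c)
  e_circ : ∀ a, circ e a = a
  circ_e : ∀ a, circ a e = a
  cinv_circ : ∀ a, circ (cinv a) a = e
  circ_cinv : ∀ a, circ a (cinv a) = e
  compat : ∀ a b c, circ a (b * c) = circ a b * a⁻¹ * circ a c

/-- The λ-map of a skew brace: `λ_a(b) = a⁻¹ · (a ∘ b)`. -/
def SkewBrace.lam {A : Type*} [Group A] (B : SkewBrace A) (a b : A) : A :=
  a⁻¹ * B.circ a b

/-- The holomorph `Hol(A) = A ⋊ Aut(A)`. -/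
abbrev Hol (A : Type*) [Group A] :=
  A ⋊[MonoidHom.id (MulAut A)] (MulAut A)

/-!
The map `a ↦ (a, λ_a)` is a homomorphism from `(A,∘)` to `Hol(A)`: the brace axiom says exactly
that each `λ_a` is an automorphism of `(A,·)`, and `(a, λ_a)(b, λ_b) = (a ∘ b, λ_a λ_b)` with
`λ_a λ_b = λ_{a ∘ b}`. Its image is a regular subgroup. Conversely, if `G` is regular, transporting
the multiplication of `G` along the bijection `G → A` gives `a ∘ b = a · μ_a(b)`, and the brace
axiom is then the statement that `μ_a` is multiplicative. The two constructions are inverse to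
each other since a skew brace is determined by `∘` alone, its identity and inverses being unique.
-/

def Hol.IsRegular {A : Type*} [Group A] (H : Subgroup (Hol A)) : Prop :=
  Function.Bijective fun h : H => (h : Hol A).left

namespace SkewBrace

variable {A : Type*} [Group A] (B : SkewBrace A)

theorem circ_one (a : A) : B.circ a 1 = a := by
  have h := B.compat a 1 1
  rw [one_mul, mul_assoc, left_eq_mul, inv_mul_eq_one] at h
  exact h.symm

theorem e_eq_one : B.e = 1 :=
  (B.circ_one B.e).symm.trans (B.e_circ 1)

theorem ext_circ {B C : SkewBrace A} (h : B.circ = C.circ) : B = C := by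
  have he : B.e = C.e := B.e_eq_one.trans C.e_eq_one.symm
  have hinv : B.cinv = C.cinv := funext fun a => calc
    B.cinv a = B.circ (B.cinv a) (B.circ a (C.cinv a)) := by
      rw [h, C.circ_cinv, ← he, ← h, B.circ_e]
    _ = C.cinv a := by rw [← B.circ_assoc, B.cinv_circ, B.e_circ]
  cases B; cases C
  cases h; cases he; cases hinv
  rfl

theorem mul_lam (a b : A) : a * B.lam a b = B.circ a b := by
  simp [lam]

theorem lam_mul (a b c : A) : B.lam a (b * c) = B.lam a b * B.lam a c := by
  simp only [lam, B.compat]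
  group

theorem lam_inv (a b : A) : B.lam a b⁻¹ = (B.lam a b)⁻¹ :=
  map_inv (MonoidHom.mk' (B.lam a) (B.lam_mul a)) b

theorem lam_lam (a b c : A) : B.lam a (B.lam b c) = B.lam (B.circ a b) c :=
  calc B.lam a (b⁻¹ * B.circ b c) = (B.lam a b)⁻¹ * B.lam a (B.circ b c) := by
        rw [lam_mul, lam_inv]
    _ = B.lam (B.circ a b) c := by
        simp only [lam, B.circ_assoc]
        group

theorem lam_e (c : A) : B.lam B.e c = c := by
  rw [lam, B.e_circ, B.e_eq_one, inv_one, one_mul]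

def lamAut (a : A) : MulAut A where
  toFun := B.lam a
  invFun := B.lam (B.cinv a)
  left_inv c := by rw [B.lam_lam, B.cinv_circ, B.lam_e]
  right_inv c := by rw [B.lam_lam, B.circ_cinv, B.lam_e]
  map_mul' := B.lam_mul a

@[simp]
theorem lamAut_apply (a b : A) : B.lamAut a b = B.lam a b := rfl

theorem lamAut_circ (a b : A) : B.lamAut (B.circ a b) = B.lamAut a * B.lamAut b :=
  MulEquiv.ext fun c => (B.lam_lam a b c).symm

theorem lamAut_e : B.lamAut B.e = 1 :=
  MulEquiv.ext B.lam_e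

theorem lamAut_cinv (a : A) : B.lamAut (B.cinv a) = (B.lamAut a)⁻¹ :=
  eq_inv_of_mul_eq_one_left (by rw [← lamAut_circ, B.cinv_circ, lamAut_e])

theorem lam_cinv_inv (a : A) : B.lam (B.cinv a) a⁻¹ = B.cinv a := by
  rw [lam_inv, lam, B.cinv_circ, B.e_eq_one, mul_one, inv_inv]

def holElt (a : A) : Hol A := ⟨a, B.lamAut a⟩

theorem holElt_circ (a b : A) : B.holElt (B.circ a b) = B.holElt a * B.holElt b :=
  SemidirectProduct.ext (B.mul_lam a b).symm (B.lamAut_circ a b)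

theorem holElt_one : B.holElt 1 = 1 :=
  SemidirectProduct.ext rfl (by rw [holElt, ← B.e_eq_one, lamAut_e]; rfl)

theorem holElt_cinv (a : A) : B.holElt (B.cinv a) = (B.holElt a)⁻¹ :=
  SemidirectProduct.ext
    (show B.cinv a = (B.lamAut a)⁻¹ a⁻¹ by rw [← lamAut_cinv, lamAut_apply, lam_cinv_inv])
    (B.lamAut_cinv a)

def holSubgroup : Subgroup (Hol A) where
  carrier := Set.range B.holElt
  one_mem' := ⟨1, B.holElt_one⟩
  mul_mem' := by
    rintro _ _ ⟨a, rfl⟩ ⟨b, rfl⟩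
    exact ⟨B.circ a b, B.holElt_circ a b⟩
  inv_mem' := by
    rintro _ ⟨a, rfl⟩
    exact ⟨B.cinv a, B.holElt_cinv a⟩

theorem holElt_mem (a : A) : B.holElt a ∈ B.holSubgroup := ⟨a, rfl⟩

theorem isRegular_holSubgroup : Hol.IsRegular B.holSubgroup :=
  Function.bijective_iff_has_inverse.mpr
    ⟨fun a => ⟨B.holElt a, B.holElt_mem a⟩, fun ⟨_, ⟨_, rfl⟩⟩ => rfl, fun _ => rfl⟩

theorem mem_holSubgroup {x : Hol A} : x ∈ B.holSubgroup ↔ x.right = B.lamAut x.left := by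
  constructor
  · rintro ⟨a, rfl⟩
    rfl
  · intro h
    exact ⟨x.left, SemidirectProduct.ext rfl h.symm⟩

end SkewBrace

namespace Hol.IsRegular

variable {A : Type*} [Group A] {H : Subgroup (Hol A)} (hH : IsRegular H)

/-- The unique element `(a, μ_a)` of `H` over `a`. -/
noncomputable def lift (a : A) : Hol A :=
  (Equiv.ofBijective _ hH).symm a

theorem lift_mem (a : A) : hH.lift a ∈ H :=
  ((Equiv.ofBijective _ hH).symm a).prop

@[simp]
theorem lift_left (a : A) : (hH.lift a).left = a :=
  Equiv.ofBijective_apply_symm_apply _ hH a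

theorem lift_left_of_mem {x : Hol A} (hx : x ∈ H) : hH.lift x.left = x :=
  congrArg Subtype.val (Equiv.ofBijective_symm_apply_apply _ hH ⟨x, hx⟩)

theorem mem_iff {x : Hol A} : x ∈ H ↔ x.right = (hH.lift x.left).right := by
  constructor
  · intro hx
    rw [hH.lift_left_of_mem hx]
  · intro h
    rw [SemidirectProduct.ext (hH.lift_left x.left).symm h]
    exact hH.lift_mem x.left

theorem lift_one : hH.lift 1 = 1 :=
  hH.lift_left_of_mem H.one_mem

theorem lift_mul_left (a b : A) : (hH.lift a * hH.lift b).left = a * (hH.lift a).right b := by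
  rw [SemidirectProduct.mul_left, lift_left, lift_left]
  rfl

noncomputable def toSkewBrace : SkewBrace A where
  circ a b := (hH.lift a * hH.lift b).left
  e := 1
  cinv a := (hH.lift a)⁻¹.left
  circ_assoc a b c := by
    rw [hH.lift_left_of_mem (H.mul_mem (hH.lift_mem a) (hH.lift_mem b)),
      hH.lift_left_of_mem (H.mul_mem (hH.lift_mem b) (hH.lift_mem c)), mul_assoc]
  e_circ a := by rw [hH.lift_one, one_mul, lift_left]
  circ_e a := by rw [hH.lift_one, mul_one, lift_left]
  cinv_circ a := by rw [hH.lift_left_of_mem (H.inv_mem (hH.lift_mem a)), inv_mul_cancel]; rfl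
  circ_cinv a := by rw [hH.lift_left_of_mem (H.inv_mem (hH.lift_mem a)), mul_inv_cancel]; rfl
  compat a b c := by
    simp only [lift_mul_left, map_mul]
    group

theorem toSkewBrace_circ (a b : A) : hH.toSkewBrace.circ a b = a * (hH.lift a).right b :=
  hH.lift_mul_left a b

theorem toSkewBrace_lamAut (a : A) : hH.toSkewBrace.lamAut a = (hH.lift a).right :=
  MulEquiv.ext fun b => by simp [SkewBrace.lam, toSkewBrace_circ]

theorem holSubgroup_toSkewBrace : hH.toSkewBrace.holSubgroup = H := by
  ext x
  rw [SkewBrace.mem_holSubgroup, hH.mem_iff, toSkewBrace_lamAut]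

end Hol.IsRegular

theorem SkewBrace.toSkewBrace_isRegular_holSubgroup {A : Type*} [Group A] (B : SkewBrace A) :
    B.isRegular_holSubgroup.toSkewBrace = B := by
  refine SkewBrace.ext_circ (funext₂ fun a b => ?_)
  have hlift : B.isRegular_holSubgroup.lift a = B.holElt a :=
    B.isRegular_holSubgroup.lift_left_of_mem (B.holElt_mem a)
  rw [Hol.IsRegular.toSkewBrace_circ, hlift]
  exact B.mul_lam a b

/-- For a group `(A,·)`, there is a bijective correspondence between skew
brace structures `∘` on `(A,·)` and regular subgroups of `Hol(A,·)`: the skew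
brace `∘` corresponds to `{(a, λ_a) | a ∈ A}`, i.e. to the subgroup whose
elements `(a, μ)` satisfy `μ(b) = a⁻¹·(a ∘ b)` (equivalently
`a ∘ b = a·μ(b)`). -/
theorem stmt18 {A : Type*} [Group A] :
    ∃ eq : SkewBrace A ≃
      {H : Subgroup (Hol A) //
        Function.Bijective fun h : H => (h : Hol A).left},
      ∀ B : SkewBrace A, ∀ x : Hol A,
        x ∈ (eq B : Subgroup (Hol A)) ↔
          ∀ b : A, x.right b = x.left⁻¹ * B.circ x.left b := by
  refine ⟨⟨fun B => ⟨B.holSubgroup, B.isRegular_holSubgroup⟩,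
    fun H => Hol.IsRegular.toSkewBrace H.2, SkewBrace.toSkewBrace_isRegular_holSubgroup,
    fun H => Subtype.ext (Hol.IsRegular.holSubgroup_toSkewBrace H.2)⟩,
    fun B _ => B.mem_holSubgroup.trans MulEquiv.ext_iff⟩
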